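/- Let I be a finite set of items with |I| = N, let p ∈ (0,1), and let k be a positive integer with ⌊N/2⌋ < k ≤ N. Then there exist length-k rankings X, Y into I achieving RBO(X,Y)@k = (1−p)·∑_{d=⌊N/2⌋+1}^{k} p^{d−1}·(2d − N)/d; for instance, enumerating I as {a_1,…,a_N}, the rankings X(i) = a_i and Y(i) = a_{N+1−i} satisfy |X[1:d] ∩ Y[1:d]| = max(0, 2d − N) for all d ≤ k, hence attain this value. Consequently this value is the minimum of RBO@k over all pairs of length-k rankings. -/
import Mathlib

open Finset

/-- The set of the first `d` values of a ranking `X : Fin k → ι`. -/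
def pref {ι : Type*} [DecidableEq ι] {k : ℕ} (X : Fin k → ι) (d : ℕ) : Finset ι :=
  (Finset.univ.filter fun i : Fin k => (i : ℕ) < d).image X

/-- Rank-Biased Overlap at depth `k` with parameter `p`. -/
noncomputable def RBO {ι : Type*} [DecidableEq ι] {k : ℕ} (p : ℝ) (X Y : Fin k → ι) : ℝ :=
  (1 - p) * ∑ d ∈ Finset.Icc 1 k, p ^ (d - 1) * ((pref X d ∩ pref Y d).card : ℝ) / d

lemma card_filter_val {k : ℕ} (P : ℕ → Prop) [DecidablePred P] :
    (Finset.univ.filter fun i : Fin k => P i.val).card = ((Finset.range k).filter P).card := by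
  apply Finset.card_bij' (fun i _ => i.val) (fun j hj => ⟨j, by simp at hj; exact hj.1⟩)
  · intro a _; rfl
  · intro j _; rfl
  · intro a ha; simp at ha; simp [a.2, ha]
  · intro j hj; simp at hj; simp [hj.2]

lemma card_pref {ι : Type*} [DecidableEq ι] {k : ℕ} {X : Fin k → ι}
    (hX : Function.Injective X) {d : ℕ} (h : d ≤ k) : (pref X d).card = d := by
  rw [pref, Finset.card_image_of_injective _ hX,
    card_filter_val (fun n => n < d)]
  have : (Finset.range k).filter (fun n => n < d) = Finset.range d := by
    ext n; simp; omega
  rw [this, Finset.card_range]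

lemma sum_max_eq (p : ℝ) (N k : ℕ) (hk : N / 2 ≤ k) :
    ∑ d ∈ Finset.Icc 1 k, p ^ (d - 1) * (max 0 (2 * (d : ℝ) - N)) / d
      = ∑ d ∈ Finset.Icc (N / 2 + 1) k, p ^ (d - 1) * (2 * (d : ℝ) - N) / d := by
  have e1 : Finset.Icc 1 k = Finset.Ioc 0 k := by ext x; simp; omega
  have e2 : Finset.Icc (N / 2 + 1) k = Finset.Ioc (N / 2) k := by ext x; simp
  rw [e1, e2, ← Finset.sum_Ioc_consecutive _ (Nat.zero_le (N / 2)) hk]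
  have h1 : ∑ d ∈ Finset.Ioc 0 (N / 2), p ^ (d - 1) * (max 0 (2 * (d : ℝ) - N)) / d = 0 := by
    apply Finset.sum_eq_zero
    intro d hd
    simp only [Finset.mem_Ioc] at hd
    have : 2 * d ≤ N := by omega
    have : 2 * (d : ℝ) - N ≤ 0 := by
      have := (Nat.cast_le (α := ℝ)).mpr this; push_cast at this ⊢; linarith
    rw [max_eq_left this]; ring
  rw [h1, zero_add]
  apply Finset.sum_congr rfl
  intro d hd
  simp only [Finset.mem_Ioc] at hd
  have : N < 2 * d := by omega
  have : (0 : ℝ) ≤ 2 * (d : ℝ) - N := by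
    have := (Nat.cast_le (α := ℝ)).mpr this.le; push_cast at this ⊢; linarith
  rw [max_eq_right this]

theorem rbo_min_attained {ι : Type*} [Fintype ι] [DecidableEq ι]
    (N : ℕ) (hN : Fintype.card ι = N) (p : ℝ) (hp : p ∈ Set.Ioo (0 : ℝ) 1)
    (k : ℕ) (hk1 : N / 2 < k) (hk2 : k ≤ N) :
    (∃ X Y : Fin k → ι, Function.Injective X ∧ Function.Injective Y ∧
        (∀ d ≤ k, ((pref X d ∩ pref Y d).card : ℤ) = max 0 (2 * (d : ℤ) - N)) ∧
        RBO p X Y =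
          (1 - p) * ∑ d ∈ Finset.Icc (N / 2 + 1) k, p ^ (d - 1) * (2 * (d : ℝ) - N) / d) ∧
    IsLeast {r : ℝ | ∃ X Y : Fin k → ι, Function.Injective X ∧ Function.Injective Y ∧
        RBO p X Y = r}
      ((1 - p) * ∑ d ∈ Finset.Icc (N / 2 + 1) k, p ^ (d - 1) * (2 * (d : ℝ) - N) / d) := by
  obtain ⟨hp0, hp1⟩ := hp
  -- the equivalence
  let e : Fin N ≃ ι := (Fintype.equivFinOfCardEq hN).symm
  have hkN : ∀ i : Fin k, (i : ℕ) < N := fun i => lt_of_lt_of_le i.2 hk2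
  set X : Fin k → ι := fun i => e ⟨i, hkN i⟩ with hXdef
  set Y : Fin k → ι := fun i => e ⟨N - 1 - i, by have := hkN i; omega⟩ with hYdef
  have hXinj : Function.Injective X := by
    intro a b hab
    have h := congrArg Fin.val (e.injective hab)
    simp only at h
    exact Fin.ext h
  have hYinj : Function.Injective Y := by
    intro a b hab
    have h := congrArg Fin.val (e.injective hab)
    simp only at h
    have ha := hkN a; have hb := hkN b
    exact Fin.ext (by omega)
  -- prefix descriptions
  have hprefX : ∀ d ≤ k, pref X d = (Finset.univ.filter fun j : Fin N => (j : ℕ) < d).image e := by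
    intro d hd
    ext a
    simp only [pref, Finset.mem_image, Finset.mem_filter, Finset.mem_univ, true_and]
    constructor
    · rintro ⟨i, hi, rfl⟩
      exact ⟨⟨i, hkN i⟩, hi, rfl⟩
    · rintro ⟨j, hj, rfl⟩
      exact ⟨⟨j, lt_of_lt_of_le hj hd⟩, hj, rfl⟩
  have hprefY : ∀ d ≤ k, pref Y d
      = (Finset.univ.filter fun j : Fin N => N - d ≤ (j : ℕ)).image e := by
    intro d hd
    ext a
    simp only [pref, Finset.mem_image, Finset.mem_filter, Finset.mem_univ, true_and]
    constructor
    · rintro ⟨i, hi, rfl⟩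
      refine ⟨⟨N - 1 - i, by have := hkN i; omega⟩, by simp; omega, rfl⟩
    · rintro ⟨j, hj, rfl⟩
      have hjN := j.2
      refine ⟨⟨N - 1 - j, by omega⟩, by simp; omega, ?_⟩
      simp only [hYdef]
      congr 1
      exact Fin.ext (by simp; omega)
  -- intersection cardinality
  have hcard : ∀ d ≤ k, ((pref X d ∩ pref Y d).card : ℤ) = max 0 (2 * (d : ℤ) - N) := by
    intro d hd
    rw [hprefX d hd, hprefY d hd, ← Finset.image_inter _ _ e.injective, ← Finset.filter_and,
      Finset.card_image_of_injective _ e.injective]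
    have : (Finset.univ.filter fun j : Fin N => (j : ℕ) < d ∧ N - d ≤ (j : ℕ)).card
        = d - (N - d) := by
      rw [card_filter_val (fun n => n < d ∧ N - d ≤ n)]
      have : (Finset.range N).filter (fun n => n < d ∧ N - d ≤ n) = Finset.Ico (N - d) d := by
        ext n; simp [Finset.mem_Ico]; omega
      rw [this, Nat.card_Ico]
    rw [this]
    have hdN : d ≤ N := le_trans hd hk2
    omega
  refine ⟨⟨X, Y, hXinj, hYinj, hcard, ?_⟩, ?_, ?_⟩
  · -- RBO value
    rw [RBO, ← sum_max_eq p N k hk1.le]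
    congr 1
    apply Finset.sum_congr rfl
    intro d hd
    simp only [Finset.mem_Icc] at hd
    have h := hcard d hd.2
    have : ((pref X d ∩ pref Y d).card : ℝ) = max 0 (2 * (d : ℝ) - N) := by
      have := congrArg (fun z : ℤ => (z : ℝ)) h
      push_cast at this
      simpa using this
    rw [this]
  · -- membership
    refine ⟨X, Y, hXinj, hYinj, ?_⟩
    rw [RBO, ← sum_max_eq p N k hk1.le]
    congr 1
    apply Finset.sum_congr rfl
    intro d hd
    simp only [Finset.mem_Icc] at hd
    have h := hcard d hd.2
    have : ((pref X d ∩ pref Y d).card : ℝ) = max 0 (2 * (d : ℝ) - N) := by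
      have := congrArg (fun z : ℤ => (z : ℝ)) h
      push_cast at this
      simpa using this
    rw [this]
  · -- lower bound
    rintro r ⟨A, B, hA, hB, rfl⟩
    rw [RBO, ← sum_max_eq p N k hk1.le]
    apply mul_le_mul_of_nonneg_left _ (by linarith)
    apply Finset.sum_le_sum
    intro d hd
    simp only [Finset.mem_Icc] at hd
    have hdk := hd.2
    have hcA := card_pref hA hdk
    have hcB := card_pref hB hdk
    have hU : (pref A d ∪ pref B d).card ≤ N := by
      rw [← hN, ← Finset.card_univ]
      exact Finset.card_le_card (Finset.subset_univ _)
    have hI : (pref A d).card + (pref B d).card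
        = (pref A d ∩ pref B d).card + (pref A d ∪ pref B d).card :=
      (Finset.card_inter_add_card_union _ _).symm
    have hge : max 0 (2 * (d : ℝ) - N) ≤ ((pref A d ∩ pref B d).card : ℝ) := by
      have h1 : (0 : ℝ) ≤ ((pref A d ∩ pref B d).card : ℝ) := Nat.cast_nonneg _
      have h2 : 2 * (d : ℝ) - N ≤ ((pref A d ∩ pref B d).card : ℝ) := by
        have : 2 * d ≤ (pref A d ∩ pref B d).card + N := by omega
        have := (Nat.cast_le (α := ℝ)).mpr this
        push_cast at this
        linarith
      exact max_le h1 h2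
    have hd1 : (0 : ℝ) < d := by
      have : 0 < d := hd.1
      exact_mod_cast this
    have hpow : (0 : ℝ) ≤ p ^ (d - 1) := le_of_lt (pow_pos hp0 _)
    gcongr
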